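/- Let Γ act on a group G by automorphisms and N a Γ-stable normal subgroup. If both H¹(Γ, G/N) is finite and, for every 1-cocycle Φ : Γ → G, the twisted cohomology set H¹(Γ_Φ, N) is finite, then H¹(Γ, G) is finite. -/

import Mathlib

universe u

def IsCocycle {Γ G : Type*} [Group Γ] [Group G] [MulDistribMulAction Γ G]
    (Φ : Γ → G) : Prop :=
  ∀ σ τ : Γ, Φ (σ * τ) = Φ σ * σ • Φ τ

def Cohomologous {Γ G : Type*} [Group Γ] [Group G] [MulDistribMulAction Γ G]
    (Φ Ψ : Γ → G) : Prop :=
  ∃ b : G, ∀ σ : Γ, Ψ σ = b⁻¹ * Φ σ * σ • b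

/-- A cocycle with values in `G/N`, represented by a lift `Γ → G`. -/
def CocycleModN {Γ G : Type*} [Group Γ] [Group G] [MulDistribMulAction Γ G]
    (N : Subgroup G) (Φ : Γ → G) : Prop :=
  ∀ σ τ : Γ, (Φ (σ * τ))⁻¹ * (Φ σ * σ • Φ τ) ∈ N

/-- The cohomologous relation for `G/N`-valued cocycles, via lifts. -/
def CohomologousModN {Γ G : Type*} [Group Γ] [Group G] [MulDistribMulAction Γ G]
    (N : Subgroup G) (Φ Ψ : Γ → G) : Prop :=
  ∃ b : G, ∀ σ : Γ, (Ψ σ)⁻¹ * (b⁻¹ * Φ σ * σ • b) ∈ N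

/-- A cocycle for the `Φ`-twisted action, valued in `N`. -/
def TwCocycleN {Γ G : Type*} [Group Γ] [Group G] [MulDistribMulAction Γ G]
    (Φ : Γ → G) (N : Subgroup G) (Ψ : Γ → G) : Prop :=
  (∀ σ : Γ, Ψ σ ∈ N) ∧ ∀ σ τ : Γ, Ψ (σ * τ) = Ψ σ * (Φ σ * σ • Ψ τ * (Φ σ)⁻¹)

/-- Cohomologous (via an element of `N`) for the `Φ`-twisted action. -/
def TwCohomologousN {Γ G : Type*} [Group Γ] [Group G] [MulDistribMulAction Γ G]
    (Φ : Γ → G) (N : Subgroup G) (Ψ Λ : Γ → G) : Prop :=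
  ∃ b ∈ N, ∀ σ : Γ, Λ σ = b⁻¹ * Ψ σ * (Φ σ * σ • b * (Φ σ)⁻¹)

/-- `H¹(Γ,G)`. -/
def H1 (Γ G : Type u) [Group Γ] [Group G] [MulDistribMulAction Γ G] : Type u :=
  Quot (fun Φ Ψ : {f : Γ → G // IsCocycle f} => Cohomologous Φ.1 Ψ.1)

/-- `H¹(Γ,G/N)` (via lifted cocycles). -/
def H1modN (Γ : Type u) {G : Type u} [Group Γ] [Group G] [MulDistribMulAction Γ G]
    (N : Subgroup G) : Type u :=
  Quot (fun Φ Ψ : {f : Γ → G // CocycleModN N f} => CohomologousModN N Φ.1 Ψ.1)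

/-- `H¹(Γ_Φ,N)`, the twisted cohomology set. -/
def H1twN {Γ G : Type u} [Group Γ] [Group G] [MulDistribMulAction Γ G]
    (Φ : Γ → G) (N : Subgroup G) : Type u :=
  Quot (fun Ψ Λ : {f : Γ → G // TwCocycleN Φ N f} => TwCohomologousN Φ N Ψ.1 Λ.1)

/-!
Every cocycle in the fibre of `H¹(Γ,G) → H¹(Γ,G/N)` over the class of a cocycle `Φ` can be moved
within its class so that it agrees with `Φ` modulo `N`; it is then `σ ↦ Ψ σ * Φ σ` for a cocycle `Ψ`
of the `Φ`-twisted action on `N`. Hence each fibre is the image of `H¹(Γ_Φ,N)`, so `H¹(Γ,G)` is a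
finite union of finite sets.
-/

section

variable {Γ G : Type u} [Group Γ] [Group G] [MulDistribMulAction Γ G]

theorem IsCocycle.conj {Φ : Γ → G} (hΦ : IsCocycle Φ) (c : G) :
    IsCocycle fun σ => c⁻¹ * Φ σ * σ • c := fun σ τ => by
  simp only [hΦ σ τ, smul_mul', smul_inv', mul_smul]
  group

theorem IsCocycle.cocycleModN {Φ : Γ → G} (hΦ : IsCocycle Φ) (N : Subgroup G) :
    CocycleModN N Φ := fun σ τ => by
  rw [hΦ σ τ, inv_mul_cancel]
  exact one_mem N

theorem cohomologousModN_equivalence (N : Subgroup G) [hN : N.Normal] :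
    Equivalence (CohomologousModN (Γ := Γ) N) where
  refl Φ := ⟨1, fun σ => by simp⟩
  symm := by
    rintro Φ Ψ ⟨b, hb⟩
    refine ⟨b⁻¹, fun σ => ?_⟩
    have hconj : (Φ σ)⁻¹ * (b⁻¹⁻¹ * Ψ σ * σ • b⁻¹)
        = σ • b * ((Ψ σ)⁻¹ * (b⁻¹ * Φ σ * σ • b))⁻¹ * (σ • b)⁻¹ := by
      rw [smul_inv']
      group
    rw [hconj]
    exact hN.conj_mem _ (inv_mem (hb σ)) _
  trans := by
    rintro Φ Ψ Χ ⟨b, hb⟩ ⟨c, hc⟩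
    refine ⟨b * c, fun σ => ?_⟩
    have hsplit : (Χ σ)⁻¹ * ((b * c)⁻¹ * Φ σ * σ • (b * c))
        = (Χ σ)⁻¹ * (c⁻¹ * Ψ σ * σ • c) *
          ((σ • c)⁻¹ * ((Ψ σ)⁻¹ * (b⁻¹ * Φ σ * σ • b)) * σ • c) := by
      rw [smul_mul']
      group
    rw [hsplit]
    exact mul_mem (hc σ) (hN.conj_mem' _ (hb σ) _)

theorem TwCocycleN.isCocycle_mul {Φ Ψ : Γ → G} {N : Subgroup G} (hΦ : IsCocycle Φ)
    (hΨ : TwCocycleN Φ N Ψ) : IsCocycle fun σ => Ψ σ * Φ σ := fun σ τ => by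
  simp only [hΨ.2 σ τ, hΦ σ τ, smul_mul']
  group

theorem twCocycleN_mul_inv {Φ Φ' : Γ → G} {N : Subgroup G} [hN : N.Normal] (hΦ : IsCocycle Φ)
    (hΦ' : IsCocycle Φ') (hmod : ∀ σ, (Φ σ)⁻¹ * Φ' σ ∈ N) :
    TwCocycleN Φ N fun σ => Φ' σ * (Φ σ)⁻¹ := by
  refine ⟨fun σ => ?_, fun σ τ => ?_⟩
  · simpa using hN.conj_mem _ (hmod σ) (Φ σ)
  · simp only [hΦ' σ τ, hΦ σ τ, smul_mul', smul_inv']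
    group

namespace H1

def toModN (N : Subgroup G) : H1 Γ G → H1modN Γ N :=
  Quot.lift (fun Φ => Quot.mk _ ⟨Φ.1, Φ.2.cocycleModN N⟩) fun Φ Ψ ⟨b, hb⟩ =>
    Quot.sound ⟨b, fun σ => by rw [hb σ, inv_mul_cancel]; exact one_mem N⟩

def twist {Φ : Γ → G} (hΦ : IsCocycle Φ) (N : Subgroup G) : H1twN Φ N → H1 Γ G :=
  Quot.lift (fun Ψ => Quot.mk _ ⟨fun σ => Ψ.1 σ * Φ σ, Ψ.2.isCocycle_mul hΦ⟩)
    fun Ψ Λ ⟨c, _, hc⟩ => Quot.sound ⟨c, fun σ => by simp only [hc σ]; group⟩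

theorem mem_range_twist_of_toModN_eq {N : Subgroup G} [N.Normal] {Φ : Γ → G}
    (hΦ : IsCocycle Φ) {a : H1 Γ G} (ha : toModN N a = toModN N (Quot.mk _ ⟨Φ, hΦ⟩)) :
    a ∈ Set.range (twist hΦ N) := by
  obtain ⟨⟨Φ', hΦ'⟩, rfl⟩ := Quot.exists_rep a
  obtain ⟨c, hc⟩ : CohomologousModN N Φ' Φ :=
    ((cohomologousModN_equivalence N).comap Subtype.val).eqvGen_iff.mp (Quot.eqvGen_exact ha)
  refine ⟨Quot.mk _ ⟨_, twCocycleN_mul_inv hΦ (hΦ'.conj c) hc⟩, Quot.sound ⟨c⁻¹, fun σ => ?_⟩⟩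
  simp only [inv_mul_cancel_right, smul_inv']
  group

theorem finite_preimage_toModN {N : Subgroup G} [N.Normal]
    (hfin : ∀ Φ : Γ → G, IsCocycle Φ → Finite (H1twN Φ N)) (b : H1modN Γ N) :
    (toModN N ⁻¹' {b}).Finite := by
  rcases (toModN N ⁻¹' {b}).eq_empty_or_nonempty with hempty | ⟨a₀, rfl⟩
  · exact hempty ▸ Set.finite_empty
  obtain ⟨⟨Φ, hΦ⟩, rfl⟩ := Quot.exists_rep a₀
  have := hfin Φ hΦ
  exact (Set.finite_range (twist hΦ N)).subset fun a ha => mem_range_twist_of_toModN_eq hΦ ha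

end H1

end

theorem finite_H1_general {Γ G : Type u} [Group Γ] [Group G] [MulDistribMulAction Γ G]
    (N : Subgroup G) [N.Normal]
    (h1 : Finite (H1modN Γ N))
    (h2 : ∀ Φ : Γ → G, IsCocycle Φ → Finite (H1twN Φ N)) :
    Finite (H1 Γ G) :=
  Set.finite_univ_iff.mp <|
    Set.finite_univ.preimage' fun b _ => H1.finite_preimage_toModN h2 b

/-- If `H¹(Γ,G/N)` is finite and `H¹(Γ_Φ,N)` is finite for every 1-cocycle
`Φ : Γ → G`, then `H¹(Γ,G)` is finite. -/
theorem finite_H1 {Γ G : Type u} [Group Γ] [Group G] [MulDistribMulAction Γ G]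
    (N : Subgroup G) [N.Normal] (hstab : ∀ (σ : Γ), ∀ n ∈ N, σ • n ∈ N)
    (h1 : Finite (H1modN Γ N))
    (h2 : ∀ Φ : Γ → G, IsCocycle Φ → Finite (H1twN Φ N)) :
    Finite (H1 Γ G) :=
  finite_H1_general N h1 h2
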